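/- arXiv:0809.2093 — 3 statements merged into one kernel-verified Lean document; each statement's English description precedes it below -/
import Mathlib

section
/- Let A be an m×n sign matrix (entries ±1) and let α ≥ 1. Define the α-approximation rank rk_α(A) as the minimum rank of a real matrix A' such that 1 ≤ A[i,j]·A'[i,j] ≤ α for all i,j, and define γ₂^α(A) as the minimum of γ₂(A') over the same set of matrices A', where γ₂(A') = max over unit vectors u,v of ‖A' ∘ (v uᵀ)‖_tr. Then rk_α(A) ≥ γ₂^α(A)² / α². -/
open Matrix Finset

noncomputable def traceNorm {m n : ℕ} (A : Matrix (Fin m) (Fin n) ℝ) : ℝ :=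
  ∑ i, Real.sqrt ((Matrix.isHermitian_conjTranspose_mul_self A).eigenvalues i)

noncomputable def gamma2 {m n : ℕ} (A : Matrix (Fin m) (Fin n) ℝ) : ℝ :=
  sSup { t | ∃ (u : Fin n → ℝ) (v : Fin m → ℝ), (∑ j, (u j) ^ 2 = 1) ∧ (∑ i, (v i) ^ 2 = 1) ∧
      t = traceNorm (Matrix.hadamard A (Matrix.vecMulVec v u)) }

noncomputable def approxRank {m n : ℕ} (A : Matrix (Fin m) (Fin n) ℝ) (α : ℝ) : ℕ :=
  sInf { r | ∃ B : Matrix (Fin m) (Fin n) ℝ, B.rank = r ∧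
      ∀ i j, 1 ≤ A i j * B i j ∧ A i j * B i j ≤ α }

noncomputable def gamma2Approx {m n : ℕ} (A : Matrix (Fin m) (Fin n) ℝ) (α : ℝ) : ℝ :=
  sInf { g | ∃ B : Matrix (Fin m) (Fin n) ℝ,
      (∀ i j, 1 ≤ A i j * B i j ∧ A i j * B i j ≤ α) ∧ g = gamma2 B }

/-!
The singular values of `M` are the square roots of the eigenvalues of `Mᴴ * M`; exactly `rank M`
of them are nonzero and their squares sum to `‖M‖_F²`, so Cauchy–Schwarz gives
`‖M‖_tr ≤ √(rank M) ‖M‖_F`. Rescaling rows and columns by unit vectors `v`, `u` does not raise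
the rank, and if `|B i j| ≤ α` it keeps `‖B ∘ v uᵀ‖_F ≤ α`. Hence `γ₂(B) ≤ √(rank B) α` for every
`B` with `1 ≤ A i j B i j ≤ α` (such `B` have `|B i j| ≤ α` since `A` is a sign matrix); applied
to a `B` of minimal rank this bounds `γ₂^α(A)` by `√(rk_α A) α`.
-/

section Spectrum

variable {m n : Type*} [Fintype m] [Fintype n] [DecidableEq n]

lemma sum_eigenvalues_conjTranspose_mul_self (M : Matrix m n ℝ) :
    ∑ i, (isHermitian_conjTranspose_mul_self M).eigenvalues i = ∑ i, ∑ j, M i j ^ 2 := by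
  have := (isHermitian_conjTranspose_mul_self M).trace_eq_sum_eigenvalues
  simp only [RCLike.ofReal_real_eq_id, id_eq] at this
  rw [← this, Finset.sum_comm]
  simp [trace, mul_apply, sq]

lemma card_eigenvalues_conjTranspose_mul_self_ne_zero (M : Matrix m n ℝ) :
    #{i | (isHermitian_conjTranspose_mul_self M).eigenvalues i ≠ 0} = M.rank := by
  rw [← rank_conjTranspose_mul_self,
    (isHermitian_conjTranspose_mul_self M).rank_eq_card_non_zero_eigs, Fintype.card_subtype]

end Spectrum

lemma Real.sum_sqrt_le_sqrt_card_support_mul_sqrt_sum {ι : Type*} (s : Finset ι) {f : ι → ℝ}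
    (hf : ∀ i, 0 ≤ f i) : ∑ i ∈ s, √(f i) ≤ √(#{i ∈ s | f i ≠ 0}) * √(∑ i ∈ s, f i) := by
  classical
  let χ : ι → ℝ := fun i => if f i = 0 then 0 else 1
  have hχ : ∀ i, 0 ≤ χ i := fun i => by positivity
  have hsplit : ∑ i ∈ s, √(f i) = ∑ i ∈ s, √(χ i) * √(f i) :=
    Finset.sum_congr rfl fun i _ => by by_cases h : f i = 0 <;> simp [χ, h]
  have hcard : (#{i ∈ s | f i ≠ 0} : ℝ) = ∑ i ∈ s, χ i := by
    rw [Finset.natCast_card_filter]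
    exact Finset.sum_congr rfl fun i _ => by by_cases h : f i = 0 <;> simp [χ, h]
  rw [hcard, hsplit]
  exact Real.sum_sqrt_mul_sqrt_le s hχ hf

lemma traceNorm_le_sqrt_rank_mul {m n : ℕ} (M : Matrix (Fin m) (Fin n) ℝ) :
    traceNorm M ≤ √M.rank * √(∑ i, ∑ j, M i j ^ 2) := by
  rw [← card_eigenvalues_conjTranspose_mul_self_ne_zero, ← sum_eigenvalues_conjTranspose_mul_self]
  exact Real.sum_sqrt_le_sqrt_card_support_mul_sqrt_sum _
    (eigenvalues_conjTranspose_mul_self_nonneg M)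

section Hadamard

variable {m n : Type*} [Fintype m] [Fintype n]

lemma hadamard_vecMulVec_eq_diagonal_mul_mul_diagonal {R : Type*} [CommSemiring R]
    [DecidableEq m] [DecidableEq n] (B : Matrix m n R) (v : m → R) (u : n → R) :
    B ⊙ vecMulVec v u = diagonal v * B * diagonal u := by
  ext i j
  simp only [hadamard_apply, vecMulVec_apply, mul_diagonal, diagonal_mul]
  ring

lemma rank_hadamard_vecMulVec_le {R : Type*} [CommRing R] [StrongRankCondition R]
    [DecidableEq m] [DecidableEq n]
    (B : Matrix m n R) (v : m → R) (u : n → R) : (B ⊙ vecMulVec v u).rank ≤ B.rank := by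
  rw [hadamard_vecMulVec_eq_diagonal_mul_mul_diagonal]
  exact (rank_mul_le_left _ _).trans (rank_mul_le_right _ _)

lemma sum_sq_hadamard_vecMulVec_le {B : Matrix m n ℝ} {c : ℝ} (hB : ∀ i j, |B i j| ≤ c)
    (v : m → ℝ) (u : n → ℝ) :
    ∑ i, ∑ j, (B ⊙ vecMulVec v u) i j ^ 2 ≤ c ^ 2 * ((∑ i, v i ^ 2) * ∑ j, u j ^ 2) := by
  simp_rw [Finset.sum_mul_sum, Finset.mul_sum]
  gcongr with i _ j _
  have hBc : B i j ^ 2 ≤ c ^ 2 := sq_le_sq.mpr ((hB i j).trans (le_abs_self c))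
  calc (B ⊙ vecMulVec v u) i j ^ 2 = B i j ^ 2 * (v i ^ 2 * u j ^ 2) := by
        simp only [hadamard_apply, vecMulVec_apply]; ring
    _ ≤ c ^ 2 * (v i ^ 2 * u j ^ 2) := by gcongr

end Hadamard

lemma gamma2_nonneg {m n : ℕ} (B : Matrix (Fin m) (Fin n) ℝ) : 0 ≤ gamma2 B :=
  Real.sSup_nonneg fun _ ⟨_, _, _, _, ht⟩ => ht ▸ Finset.sum_nonneg fun _ _ => Real.sqrt_nonneg _

lemma gamma2_le_sqrt_rank_mul {m n : ℕ} {B : Matrix (Fin m) (Fin n) ℝ} {c : ℝ} (hc : 0 ≤ c)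
    (hB : ∀ i j, |B i j| ≤ c) : gamma2 B ≤ √B.rank * c := by
  refine Real.sSup_le ?_ (by positivity)
  rintro _ ⟨u, v, hu, hv, rfl⟩
  have hfrob : √(∑ i, ∑ j, (B ⊙ vecMulVec v u) i j ^ 2) ≤ c := by
    refine Real.sqrt_le_iff.mpr ⟨hc, ?_⟩
    simpa [hu, hv] using sum_sq_hadamard_vecMulVec_le hB v u
  calc traceNorm (B ⊙ vecMulVec v u)
      ≤ √(B ⊙ vecMulVec v u).rank * √(∑ i, ∑ j, (B ⊙ vecMulVec v u) i j ^ 2) :=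
        traceNorm_le_sqrt_rank_mul _
    _ ≤ √B.rank * c := by
        gcongr
        exact rank_hadamard_vecMulVec_le B v u

section Approx

def IsApprox {m n : ℕ} (A : Matrix (Fin m) (Fin n) ℝ) (α : ℝ) (B : Matrix (Fin m) (Fin n) ℝ) :
    Prop :=
  ∀ i j, 1 ≤ A i j * B i j ∧ A i j * B i j ≤ α

variable {m n : ℕ} {A B : Matrix (Fin m) (Fin n) ℝ} {α : ℝ}

lemma IsApprox.abs_le (hA : ∀ i j, A i j = 1 ∨ A i j = -1) (hB : IsApprox A α B) (i : Fin m)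
    (j : Fin n) : |B i j| ≤ α := by
  have hAB := hB i j
  rcases hA i j with h | h <;> rw [h] at hAB <;> rw [_root_.abs_le] <;> constructor <;> linarith

lemma gamma2Approx_nonneg (A : Matrix (Fin m) (Fin n) ℝ) (α : ℝ) : 0 ≤ gamma2Approx A α :=
  Real.sInf_nonneg fun _ ⟨B, _, hg⟩ => hg ▸ gamma2_nonneg B

lemma gamma2Approx_le_gamma2 (hB : IsApprox A α B) : gamma2Approx A α ≤ gamma2 B :=
  csInf_le ⟨0, fun _ ⟨B', _, hg⟩ => hg ▸ gamma2_nonneg B'⟩ ⟨B, hB, rfl⟩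

lemma exists_isApprox_rank_eq_approxRank (hA : ∀ i j, A i j = 1 ∨ A i j = -1) (hα : 1 ≤ α) :
    ∃ B, IsApprox A α B ∧ B.rank = approxRank A α := by
  have hAA : IsApprox A α A := fun i j => by
    rcases hA i j with h | h <;> rw [h] <;> norm_num [hα]
  obtain ⟨B, hrank, hB⟩ := Nat.sInf_mem (s := {r | ∃ B : Matrix (Fin m) (Fin n) ℝ,
    B.rank = r ∧ IsApprox A α B}) ⟨A.rank, A, rfl, hAA⟩
  exact ⟨B, hB, hrank⟩

end Approx

theorem approxRank_ge_gamma2Approx_sq_div_alpha_sq {m n : ℕ}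
    (A : Matrix (Fin m) (Fin n) ℝ) (hA : ∀ i j, A i j = 1 ∨ A i j = -1)
    (α : ℝ) (hα : 1 ≤ α) :
    (approxRank A α : ℝ) ≥ gamma2Approx A α ^ 2 / α ^ 2 := by
  obtain ⟨B, hB, hrank⟩ := exists_isApprox_rank_eq_approxRank hA hα
  have hγ : gamma2Approx A α ≤ √B.rank * α :=
    (gamma2Approx_le_gamma2 hB).trans (gamma2_le_sqrt_rank_mul (by linarith) (hB.abs_le hA))
  rw [ge_iff_le, div_le_iff₀ (by positivity), ← hrank]
  calc gamma2Approx A α ^ 2 ≤ (√B.rank * α) ^ 2 := by gcongr; exact gamma2Approx_nonneg A α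
    _ = B.rank * α ^ 2 := by rw [mul_pow, Real.sq_sqrt (Nat.cast_nonneg _)]
end

section
/- For any m×n real matrix A, if A = Xᵀ Y with X a k×m matrix and Y a k×n matrix, then γ₂(A) ≤ c(X)·c(Y), where c(X) is the maximum Euclidean norm of a column of X, and γ₂(A) is defined as the maximum over unit vectors u, v of ‖A ∘ (v uᵀ)‖_tr. -/
open Matrix Finset

/-!
Writing `A ∘ (v uᵀ) = (X Dᵥ)ᵀ (Y Dᵤ)` with diagonal matrices `Dᵥ, Dᵤ` reduces the claim to
`‖Pᵀ Q‖_tr ≤ ‖P‖_F ‖Q‖_F`, because scaling the columns of `X` by the entries of a unit vector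
gives a matrix of Frobenius norm at most `c(X)`. For that inequality take right singular vectors
`vⱼ` of `B = Pᵀ Q` (eigenvectors of `BᵀB`) and the left singular vectors `wⱼ = B vⱼ / σⱼ` for
`σⱼ ≠ 0`; then `‖B‖_tr = ∑ σⱼ = ∑ ⟪P wⱼ, Q vⱼ⟫`, and Cauchy–Schwarz followed by Bessel's
inequality for the rows of `P` and `Q` bounds this by `‖P‖_F ‖Q‖_F`.
-/

open scoped InnerProductSpace

lemma sum_norm_sq_toEuclideanLin_le {ι κ α : Type*} [Fintype ι] [DecidableEq ι] [Fintype κ]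
    [Fintype α] (P : Matrix κ ι ℝ) {w : α → EuclideanSpace ℝ ι} (hw : Orthonormal ℝ w) :
    ∑ j, ‖toEuclideanLin P (w j)‖ ^ 2 ≤ ∑ r, ∑ t, P r t ^ 2 := by
  have hrow : ∀ j r, toEuclideanLin P (w j) r = ⟪w j, WithLp.toLp 2 (P r)⟫_ℝ := fun j r => by
    simp [toLpLin_apply, mulVec, EuclideanSpace.inner_eq_star_dotProduct]
  calc ∑ j, ‖toEuclideanLin P (w j)‖ ^ 2 = ∑ r, ∑ j, ‖⟪w j, WithLp.toLp 2 (P r)⟫_ℝ‖ ^ 2 := by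
        simp_rw [EuclideanSpace.real_norm_sq_eq, hrow, Real.norm_eq_abs, sq_abs]
        exact sum_comm
    _ ≤ ∑ r, ‖WithLp.toLp 2 (P r)‖ ^ 2 := sum_le_sum fun r _ => hw.sum_inner_products_le _
    _ = ∑ r, ∑ t, P r t ^ 2 := by simp [EuclideanSpace.real_norm_sq_eq]

lemma inner_toEuclideanLin_transpose_mul {ι κ μ : Type*} [Fintype ι] [DecidableEq ι] [Fintype κ]
    [DecidableEq κ] [Fintype μ] [DecidableEq μ] (P : Matrix κ ι ℝ) (Q : Matrix κ μ ℝ)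
    (x : EuclideanSpace ℝ ι) (y : EuclideanSpace ℝ μ) :
    ⟪x, toEuclideanLin (Pᵀ * Q) y⟫_ℝ = ⟪toEuclideanLin P x, toEuclideanLin Q y⟫_ℝ := by
  rw [← conjTranspose_eq_transpose_of_trivial, toLpLin_mul_same, LinearMap.comp_apply,
    toEuclideanLin_conjTranspose_eq_adjoint, LinearMap.adjoint_inner_right]

lemma exists_orthonormal_traceNorm_eq_sum_inner {m n : ℕ} (B : Matrix (Fin m) (Fin n) ℝ) :
    ∃ (s : Finset (Fin n)) (w : s → EuclideanSpace ℝ (Fin m)) (v : s → EuclideanSpace ℝ (Fin n)),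
      Orthonormal ℝ w ∧ Orthonormal ℝ v ∧
        traceNorm B = ∑ j, ⟪w j, toEuclideanLin B (v j)⟫_ℝ := by
  set hH := isHermitian_conjTranspose_mul_self B
  set V := hH.eigenvectorBasis
  set σ : Fin n → ℝ := fun j => √(hH.eigenvalues j)
  have hσsq : ∀ j, σ j ^ 2 = hH.eigenvalues j := fun j =>
    Real.sq_sqrt ((posSemidef_conjTranspose_mul_self B).eigenvalues_nonneg j)
  have hgram : ∀ i j, ⟪toEuclideanLin B (V i), toEuclideanLin B (V j)⟫_ℝ
      = σ j ^ 2 * ⟪V i, V j⟫_ℝ := fun i j => by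
    rw [← inner_toEuclideanLin_transpose_mul, ← conjTranspose_eq_transpose_of_trivial,
      toLpLin_apply, hH.mulVec_eigenvectorBasis, hσsq]
    exact real_inner_smul_right _ _ _
  have hV := V.orthonormal
  set s := univ.filter (σ · ≠ 0)
  have hσs : ∀ j : s, σ j ≠ 0 := fun j => (mem_filter.mp j.2).2
  refine ⟨s, fun j => (σ j)⁻¹ • toEuclideanLin B (V j), fun j => V j, ?_,
    hV.comp _ Subtype.val_injective, ?_⟩
  · rw [orthonormal_iff_ite]
    intro i j
    simp only [real_inner_smul_left, real_inner_smul_right, hgram, orthonormal_iff_ite.mp hV,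
      Subtype.ext_iff]
    split_ifs with hij
    · rw [hij]
      field_simp [hσs j]
    · simp
  · calc traceNorm B = ∑ j ∈ s, σ j := (sum_filter_ne_zero _).symm
      _ = ∑ j : s, σ j := (sum_coe_sort s σ).symm
      _ = _ := sum_congr rfl fun j _ => by
        rw [real_inner_smul_left, hgram, real_inner_self_eq_norm_sq, V.orthonormal.1]
        field_simp [hσs j]

lemma traceNorm_transpose_mul_le {k m n : ℕ} (P : Matrix (Fin k) (Fin m) ℝ)
    (Q : Matrix (Fin k) (Fin n) ℝ) :
    traceNorm (Pᵀ * Q) ≤ √(∑ i, ∑ j, P i j ^ 2) * √(∑ i, ∑ j, Q i j ^ 2) := by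
  obtain ⟨s, w, v, hw, hv, htr⟩ := exists_orthonormal_traceNorm_eq_sum_inner (Pᵀ * Q)
  calc traceNorm (Pᵀ * Q) = ∑ j, ⟪toEuclideanLin P (w j), toEuclideanLin Q (v j)⟫_ℝ := by
        simp only [htr, inner_toEuclideanLin_transpose_mul]
    _ ≤ ∑ j, ‖toEuclideanLin P (w j)‖ * ‖toEuclideanLin Q (v j)‖ :=
        sum_le_sum fun j _ => real_inner_le_norm _ _
    _ ≤ √(∑ j, ‖toEuclideanLin P (w j)‖ ^ 2) * √(∑ j, ‖toEuclideanLin Q (v j)‖ ^ 2) :=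
        Real.sum_mul_le_sqrt_mul_sqrt _ _ _
    _ ≤ √(∑ i, ∑ j, P i j ^ 2) * √(∑ i, ∑ j, Q i j ^ 2) := by
        gcongr
        · exact sum_norm_sq_toEuclideanLin_le P hw
        · exact sum_norm_sq_toEuclideanLin_le Q hv

lemma sqrt_sum_sq_mul_diagonal_le {ι κ : Type*} [Fintype ι] [DecidableEq ι] [Fintype κ]
    (X : Matrix κ ι ℝ) {v : ι → ℝ} (hv : ∑ j, v j ^ 2 = 1) :
    √(∑ i, ∑ j, (X * diagonal v) i j ^ 2) ≤ ⨆ j, √(∑ i, X i j ^ 2) := by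
  set c := ⨆ j, √(∑ i, X i j ^ 2)
  have hcol : ∀ j, ∑ i, X i j ^ 2 ≤ c ^ 2 := fun j =>
    (Real.sqrt_le_iff.mp (le_ciSup (f := fun j => √(∑ i, X i j ^ 2))
      (Set.finite_range _).bddAbove j)).2
  refine Real.sqrt_le_iff.mpr ⟨Real.iSup_nonneg fun j => Real.sqrt_nonneg _, ?_⟩
  calc ∑ i, ∑ j, (X * diagonal v) i j ^ 2 = ∑ j, v j ^ 2 * ∑ i, X i j ^ 2 := by
        simp only [mul_diagonal, mul_pow, mul_sum]
        rw [sum_comm]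
        exact sum_congr rfl fun j _ => sum_congr rfl fun i _ => mul_comm _ _
    _ ≤ ∑ j, v j ^ 2 * c ^ 2 := by gcongr with j; exact hcol j
    _ = c ^ 2 := by rw [← sum_mul, hv, one_mul]

lemma hadamard_vecMulVec {ι κ α : Type*} [Fintype ι] [DecidableEq ι] [Fintype κ] [DecidableEq κ]
    [CommSemiring α] (A : Matrix ι κ α) (v : ι → α) (u : κ → α) :
    A ⊙ vecMulVec v u = diagonal v * A * diagonal u := by
  ext i j
  simp only [hadamard_apply, vecMulVec_apply, mul_diagonal, diagonal_mul]
  ring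

theorem gamma2_le_factorization {k m n : ℕ}
    (A : Matrix (Fin m) (Fin n) ℝ)
    (X : Matrix (Fin k) (Fin m) ℝ) (Y : Matrix (Fin k) (Fin n) ℝ)
    (hXY : Xᵀ * Y = A) :
    gamma2 A ≤ (⨆ j, Real.sqrt (∑ i, (X i j) ^ 2)) * (⨆ j, Real.sqrt (∑ i, (Y i j) ^ 2)) := by
  subst hXY
  have hcX : 0 ≤ ⨆ j, √(∑ i, X i j ^ 2) := Real.iSup_nonneg fun _ => Real.sqrt_nonneg _
  have hcY : 0 ≤ ⨆ j, √(∑ i, Y i j ^ 2) := Real.iSup_nonneg fun _ => Real.sqrt_nonneg _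
  refine Real.sSup_le ?_ (mul_nonneg hcX hcY)
  rintro _ ⟨u, v, hu, hv, rfl⟩
  have hfactor : (Xᵀ * Y) ⊙ vecMulVec v u = (X * diagonal v)ᵀ * (Y * diagonal u) := by
    rw [hadamard_vecMulVec, transpose_mul, diagonal_transpose, Matrix.mul_assoc,
      Matrix.mul_assoc, Matrix.mul_assoc]
  rw [hfactor]
  exact (traceNorm_transpose_mul_le _ _).trans (mul_le_mul (sqrt_sum_sq_mul_diagonal_le X hv)
    (sqrt_sum_sq_mul_diagonal_le Y hu) (Real.sqrt_nonneg _) hcX)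
end

section
/- For any real matrix A, γ₂(A) ≤ ν(A), where γ₂(A) = max over unit vectors u,v of ‖A ∘ (v uᵀ)‖_tr and ν(A) = min Σᵢ|cᵢ| over representations A = Σᵢ cᵢ xᵢyᵢᵀ with xᵢ, yᵢ sign vectors. -/
open Matrix Finset

noncomputable def nu {m n : ℕ} (B : Matrix (Fin m) (Fin n) ℝ) : ℝ :=
  sInf { s | ∃ (k : ℕ) (c : Fin k → ℝ) (x : Fin k → Fin m → ℝ) (y : Fin k → Fin n → ℝ),
      (∀ i j, x i j = 1 ∨ x i j = -1) ∧ (∀ i j, y i j = 1 ∨ y i j = -1) ∧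
      B = ∑ i, c i • Matrix.vecMulVec (x i) (y i) ∧ s = ∑ i, |c i| }

/-!
Let `w` be an orthonormal eigenbasis of `MᵀM`, with eigenvalues `λⱼ`. The vectors `M wⱼ` are
pairwise orthogonal with `‖M wⱼ‖² = λⱼ`, so for `gⱼ = M wⱼ / ‖M wⱼ‖` the trace norm of `M` is
`Σⱼ ⟪gⱼ, M wⱼ⟫`. With `g` and `w` fixed this is linear in the matrix, and on a rank-one matrix
`a bᵀ` it equals `Σⱼ ⟪gⱼ, a⟫⟪wⱼ, b⟫ ≤ ‖a‖‖b‖` (Cauchy–Schwarz and Bessel); hence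
`‖Σᵢ cᵢ aᵢbᵢᵀ‖_tr ≤ Σᵢ |cᵢ| ‖aᵢ‖‖bᵢ‖`. For a sign representation `A = Σᵢ cᵢ xᵢyᵢᵀ` and unit
vectors `u, v` we have `A ∘ vuᵀ = Σᵢ cᵢ (xᵢ∘v)(yᵢ∘u)ᵀ` with `‖xᵢ∘v‖ = ‖yᵢ∘u‖ = 1`, so
`‖A ∘ vuᵀ‖_tr ≤ Σᵢ |cᵢ|`.
-/
open scoped RealInnerProductSpace

section InnerProductSpace

variable {ι E F : Type*} [NormedAddCommGroup E] [InnerProductSpace ℝ E]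
  [NormedAddCommGroup F] [InnerProductSpace ℝ F]

theorem norm_sum_smul_sq_of_pairwise_inner_eq_zero [Fintype ι] {g : ι → E}
    (hg : Pairwise fun i j => ⟪g i, g j⟫ = 0) (β : ι → ℝ) :
    ‖∑ i, β i • g i‖ ^ 2 = ∑ i, β i ^ 2 * ‖g i‖ ^ 2 := by
  classical
  rw [← real_inner_self_eq_norm_sq, sum_inner]
  refine sum_congr rfl fun i _ => ?_
  rw [inner_sum, sum_eq_single i (fun j _ hji => by
    rw [real_inner_smul_left, real_inner_smul_right, hg hji.symm, mul_zero, mul_zero])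
    (by simp), real_inner_smul_left, real_inner_smul_right, real_inner_self_eq_norm_sq]
  ring

theorem exists_normalize_of_pairwise_inner_eq_zero {f : ι → E}
    (hf : Pairwise fun i j => ⟪f i, f j⟫ = 0) :
    ∃ g : ι → E, (Pairwise fun i j => ⟪g i, g j⟫ = 0) ∧ (∀ i, ‖g i‖ ≤ 1) ∧
      ∀ i, ⟪g i, f i⟫ = ‖f i‖ := by
  refine ⟨fun i => ‖f i‖⁻¹ • f i, fun i j hij => ?_, fun i => ?_, fun i => ?_⟩
  · simp only [real_inner_smul_left, real_inner_smul_right, hf hij, mul_zero]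
  · rw [norm_smul, norm_inv, norm_norm]
    exact inv_mul_le_one_of_le₀ le_rfl (norm_nonneg _)
  · rw [real_inner_smul_left, real_inner_self_eq_norm_sq]
    rcases eq_or_ne ‖f i‖ 0 with h | h
    · simp [h]
    · field_simp

theorem abs_sum_inner_mul_inner_le [Fintype ι] {g : ι → E}
    (hg : Pairwise fun i j => ⟪g i, g j⟫ = 0) (hg₁ : ∀ i, ‖g i‖ ≤ 1) {w : ι → F}
    (hw : Orthonormal ℝ w) (a : E) (b : F) :
    |∑ i, ⟪g i, a⟫ * ⟪w i, b⟫| ≤ ‖a‖ * ‖b‖ := by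
  have hsum : ∑ i, ⟪g i, a⟫ * ⟪w i, b⟫ = ⟪∑ i, ⟪w i, b⟫ • g i, a⟫ := by
    simp only [sum_inner, real_inner_smul_left, mul_comm]
  have hnorm : ‖∑ i, ⟪w i, b⟫ • g i‖ ≤ ‖b‖ := by
    refine pow_le_pow_iff_left₀ (norm_nonneg _) (norm_nonneg _) two_ne_zero |>.mp ?_
    calc ‖∑ i, ⟪w i, b⟫ • g i‖ ^ 2 = ∑ i, ⟪w i, b⟫ ^ 2 * ‖g i‖ ^ 2 :=
          norm_sum_smul_sq_of_pairwise_inner_eq_zero hg _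
      _ ≤ ∑ i, ‖⟪w i, b⟫‖ ^ 2 := sum_le_sum fun i _ => by
          rw [Real.norm_eq_abs, sq_abs]
          exact mul_le_of_le_one_right (sq_nonneg _) (pow_le_one₀ (norm_nonneg _) (hg₁ i))
      _ ≤ ‖b‖ ^ 2 := hw.sum_inner_products_le b
  calc |∑ i, ⟪g i, a⟫ * ⟪w i, b⟫| ≤ ‖∑ i, ⟪w i, b⟫ • g i‖ * ‖a‖ :=
        hsum ▸ abs_real_inner_le_norm _ _
    _ ≤ ‖b‖ * ‖a‖ := mul_le_mul_of_nonneg_right hnorm (norm_nonneg _)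
    _ = ‖a‖ * ‖b‖ := mul_comm _ _

end InnerProductSpace

namespace Matrix

theorem sum_smul_vecMulVec_hadamard_vecMulVec {ι m n : Type*} [Fintype ι] (c : ι → ℝ)
    (x : ι → m → ℝ) (y : ι → n → ℝ) (v : m → ℝ) (u : n → ℝ) :
    (∑ i, c i • vecMulVec (x i) (y i)) ⊙ vecMulVec v u =
      ∑ i, c i • vecMulVec (x i * v) (y i * u) := by
  ext p q
  simp only [hadamard_apply, Matrix.sum_apply, Matrix.smul_apply, vecMulVec_apply, Pi.mul_apply,
    smul_eq_mul, sum_mul]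
  exact sum_congr rfl fun i _ => by ring

variable {m n : ℕ} (M : Matrix (Fin m) (Fin n) ℝ)

noncomputable abbrev rightSingularBasis : OrthonormalBasis (Fin n) ℝ (EuclideanSpace ℝ (Fin n)) :=
  (isHermitian_conjTranspose_mul_self M).eigenvectorBasis

theorem inner_toEuclideanLin_rightSingularBasis (i j : Fin n) :
    ⟪toEuclideanLin M (M.rightSingularBasis i), toEuclideanLin M (M.rightSingularBasis j)⟫ =
      (isHermitian_conjTranspose_mul_self M).eigenvalues j *
        ⟪M.rightSingularBasis i, M.rightSingularBasis j⟫ := by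
  rw [← LinearMap.adjoint_inner_right, ← toEuclideanLin_conjTranspose_eq_adjoint,
    toLpLin_apply, toLpLin_apply, mulVec_mulVec,
    (isHermitian_conjTranspose_mul_self M).mulVec_eigenvectorBasis, WithLp.toLp_smul,
    WithLp.toLp_ofLp, real_inner_smul_right]

theorem pairwise_inner_toEuclideanLin_rightSingularBasis :
    Pairwise fun i j =>
      ⟪toEuclideanLin M (M.rightSingularBasis i), toEuclideanLin M (M.rightSingularBasis j)⟫ = 0 :=
  fun i j hij => (M.inner_toEuclideanLin_rightSingularBasis i j).trans <| by
    rw [M.rightSingularBasis.orthonormal.2 hij, mul_zero]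

theorem traceNorm_eq_sum_norm_toEuclideanLin_rightSingularBasis :
    traceNorm M = ∑ j, ‖toEuclideanLin M (M.rightSingularBasis j)‖ := by
  refine sum_congr rfl fun j _ => ?_
  rw [← Real.sqrt_sq (norm_nonneg _), ← real_inner_self_eq_norm_sq,
    inner_toEuclideanLin_rightSingularBasis, real_inner_self_eq_norm_sq,
    M.rightSingularBasis.orthonormal.1 j, one_pow, mul_one]

theorem toEuclideanLin_vecMulVec (a : Fin m → ℝ) (b : Fin n → ℝ)
    (x : EuclideanSpace ℝ (Fin n)) :
    toEuclideanLin (vecMulVec a b) x = ⟪WithLp.toLp 2 b, x⟫ • WithLp.toLp 2 a := by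
  rw [toLpLin_apply, vecMulVec_mulVec, EuclideanSpace.inner_eq_star_dotProduct]
  simp [dotProduct_comm]

theorem traceNorm_le_of_eq_sum_smul_vecMulVec {ι : Type*} [Fintype ι] (c : ι → ℝ)
    (a : ι → Fin m → ℝ) (b : ι → Fin n → ℝ) (hM : M = ∑ i, c i • vecMulVec (a i) (b i)) :
    traceNorm M ≤ ∑ i, |c i| * (‖WithLp.toLp 2 (a i)‖ * ‖WithLp.toLp 2 (b i)‖) := by
  set w := M.rightSingularBasis
  obtain ⟨g, hg, hg₁, hgM⟩ :=
    exists_normalize_of_pairwise_inner_eq_zero M.pairwise_inner_toEuclideanLin_rightSingularBasis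
  calc traceNorm M = ∑ j, ⟪g j, toEuclideanLin M (w j)⟫ := by
        simp only [hgM, traceNorm_eq_sum_norm_toEuclideanLin_rightSingularBasis, w]
    _ = ∑ i, c i * ∑ j, ⟪g j, WithLp.toLp 2 (a i)⟫ * ⟪w j, WithLp.toLp 2 (b i)⟫ := by
        simp only [hM, map_sum, map_smul, LinearMap.sum_apply, LinearMap.smul_apply,
          toEuclideanLin_vecMulVec, inner_sum, real_inner_smul_right, mul_sum,
          real_inner_comm (w _)]
        rw [sum_comm]
        exact sum_congr rfl fun i _ => sum_congr rfl fun j _ => by ring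
    _ ≤ ∑ i, |c i| * (‖WithLp.toLp 2 (a i)‖ * ‖WithLp.toLp 2 (b i)‖) :=
        sum_le_sum fun i _ => (le_abs_self _).trans <| (abs_mul _ _).trans_le <|
          mul_le_mul_of_nonneg_left (abs_sum_inner_mul_inner_le hg hg₁ w.orthonormal _ _)
            (abs_nonneg _)

end Matrix

section SignVectors

variable {κ : Type*} [DecidableEq κ]

/-- `signVec p true + signVec p false = 2 • Pi.single p 1`. -/
def signVec (p : κ) (b : Bool) : κ → ℝ := fun i => if b ∧ i ≠ p then -1 else 1

theorem signVec_eq_one_or_eq_neg_one (p : κ) (b : Bool) (i : κ) :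
    signVec p b i = 1 ∨ signVec p b i = -1 := by
  unfold signVec; split_ifs <;> simp

theorem single_eq_sum_smul_vecMulVec_signVec {κ' : Type*} [DecidableEq κ'] (p : κ) (q : κ') :
    single p q (1 : ℝ) =
      ∑ b : Bool × Bool, (1 / 4 : ℝ) • vecMulVec (signVec p b.1) (signVec q b.2) := by
  ext i j
  simp only [single_apply, Matrix.sum_apply, Matrix.smul_apply, vecMulVec_apply,
    Fintype.sum_prod_type, Fintype.sum_bool, signVec, smul_eq_mul]
  rcases eq_or_ne i p with rfl | hi <;> rcases eq_or_ne j q with rfl | hj <;>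
    norm_num [*, Ne.symm]

theorem exists_eq_sum_smul_vecMulVec_sign {m n : Type*} [Fintype m] [Fintype n] [DecidableEq m]
    [DecidableEq n] (A : Matrix m n ℝ) :
    ∃ (k : ℕ) (c : Fin k → ℝ) (x : Fin k → m → ℝ) (y : Fin k → n → ℝ),
      (∀ i j, x i j = 1 ∨ x i j = -1) ∧ (∀ i j, y i j = 1 ∨ y i j = -1) ∧
      A = ∑ i, c i • vecMulVec (x i) (y i) := by
  let e := Fintype.equivFin ((m × n) × (Bool × Bool))
  refine ⟨_, fun i => A (e.symm i).1.1 (e.symm i).1.2 / 4,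
    fun i => signVec (e.symm i).1.1 (e.symm i).2.1, fun i => signVec (e.symm i).1.2 (e.symm i).2.2,
    fun _ _ => signVec_eq_one_or_eq_neg_one .., fun _ _ => signVec_eq_one_or_eq_neg_one .., ?_⟩
  rw [e.symm.sum_comp (fun t =>
      (A t.1.1 t.1.2 / 4) • vecMulVec (signVec t.1.1 t.2.1) (signVec t.1.2 t.2.2)),
    Fintype.sum_prod_type, Fintype.sum_prod_type]
  conv_lhs => rw [matrix_eq_sum_single A]
  refine sum_congr rfl fun p _ => sum_congr rfl fun q _ => ?_
  rw [← mul_one (A p q), ← smul_eq_mul, ← smul_single, single_eq_sum_smul_vecMulVec_signVec,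
    smul_sum]
  simp only [smul_smul, mul_one_div]

end SignVectors

theorem norm_toLp_mul_eq_one {κ : Type*} [Fintype κ] {x v : κ → ℝ}
    (hx : ∀ i, x i = 1 ∨ x i = -1) (hv : ∑ i, v i ^ 2 = 1) : ‖WithLp.toLp 2 (x * v)‖ = 1 := by
  have hx2 : ∀ i, x i ^ 2 = 1 := fun i => by rcases hx i with h | h <;> simp [h]
  simp only [EuclideanSpace.norm_eq, Real.norm_eq_abs, sq_abs, Pi.mul_apply, mul_pow, hx2,
    one_mul, hv, Real.sqrt_one]

theorem traceNorm_hadamard_vecMulVec_le {m n k : ℕ} {A : Matrix (Fin m) (Fin n) ℝ}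
    {c : Fin k → ℝ} {x : Fin k → Fin m → ℝ} {y : Fin k → Fin n → ℝ}
    (hx : ∀ i j, x i j = 1 ∨ x i j = -1) (hy : ∀ i j, y i j = 1 ∨ y i j = -1)
    (hA : A = ∑ i, c i • vecMulVec (x i) (y i)) {u : Fin n → ℝ} {v : Fin m → ℝ}
    (hu : ∑ j, u j ^ 2 = 1) (hv : ∑ i, v i ^ 2 = 1) :
    traceNorm (A ⊙ vecMulVec v u) ≤ ∑ i, |c i| := by
  calc traceNorm (A ⊙ vecMulVec v u)
      ≤ ∑ i, |c i| * (‖WithLp.toLp 2 (x i * v)‖ * ‖WithLp.toLp 2 (y i * u)‖) :=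
        traceNorm_le_of_eq_sum_smul_vecMulVec _ c _ _
          (hA ▸ sum_smul_vecMulVec_hadamard_vecMulVec c x y v u)
    _ = ∑ i, |c i| := by
        simp only [norm_toLp_mul_eq_one (hx _) hv, norm_toLp_mul_eq_one (hy _) hu, mul_one]

theorem gamma2_le_nu {m n : ℕ} (A : Matrix (Fin m) (Fin n) ℝ) :
    gamma2 A ≤ nu A := by
  obtain ⟨k₀, c₀, x₀, y₀, hx₀, hy₀, hA₀⟩ := exists_eq_sum_smul_vecMulVec_sign A
  have hν : 0 ≤ nu A := Real.sInf_nonneg <| by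
    rintro s ⟨k, c, x, y, -, -, -, rfl⟩
    positivity
  refine Real.sSup_le ?_ hν
  rintro t ⟨u, v, hu, hv, rfl⟩
  refine le_csInf ⟨_, k₀, c₀, x₀, y₀, hx₀, hy₀, hA₀, rfl⟩ ?_
  rintro s ⟨k, c, x, y, hx, hy, hA, rfl⟩
  exact traceNorm_hadamard_vecMulVec_le hx hy hA hu hv
end
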